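/- For every rational number t, let E_t be the plane cubic over ℚ given by y² = x³ + 2x² + (−t⁴ + 2t³ + t² − 2t − 1)x + 4t³ + 3t² − 4t − 2. Then for all rational numbers t, u with u² = 2t² + 1, the two points B₁ = (−t² + t + 1, tu) and B₂ = (t² − t − 1, tu) satisfy the equation of E_t. -/

import Mathlib

/-! With `c = t² − t − 1` the coefficient of `x` is `−c²`, so on `x = ±c` the terms `x³ − c²x`
cancel and the cubic takes the value `2c² + 4t³ + 3t² − 4t − 2 = t²(2t² + 1)`, which is `(tu)²`
on the Pell conic. -/

theorem cubic_eval_of_sq_eq_sq {R : Type*} [CommRing R] (a₂ a₆ c x : R) (hx : x ^ 2 = c ^ 2) :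
    x ^ 3 + a₂ * x ^ 2 + -c ^ 2 * x + a₆ = a₂ * c ^ 2 + a₆ := by
  linear_combination (x + a₂) * hx

/-- For the cubic `E_t : y² = x³ + 2x² + (−t⁴ + 2t³ + t² − 2t − 1)x + 4t³ + 3t² − 4t − 2`:
if `u² = 2t² + 1`, then the points `B₁ = (−t² + t + 1, tu)` and `B₂ = (t² − t − 1, tu)`
satisfy the equation of `E_t`. -/
theorem stmt18 (t u : ℚ) (h : u ^ 2 = 2 * t ^ 2 + 1) :
    (t * u) ^ 2 =
        (-t ^ 2 + t + 1) ^ 3 + 2 * (-t ^ 2 + t + 1) ^ 2 +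
          (-t ^ 4 + 2 * t ^ 3 + t ^ 2 - 2 * t - 1) * (-t ^ 2 + t + 1) +
          (4 * t ^ 3 + 3 * t ^ 2 - 4 * t - 2) ∧
    (t * u) ^ 2 =
        (t ^ 2 - t - 1) ^ 3 + 2 * (t ^ 2 - t - 1) ^ 2 +
          (-t ^ 4 + 2 * t ^ 3 + t ^ 2 - 2 * t - 1) * (t ^ 2 - t - 1) +
          (4 * t ^ 3 + 3 * t ^ 2 - 4 * t - 2) := by
  have ha₄ : -t ^ 4 + 2 * t ^ 3 + t ^ 2 - 2 * t - 1 = -(t ^ 2 - t - 1) ^ 2 := by ring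
  have hy : (t * u) ^ 2 = 2 * (t ^ 2 - t - 1) ^ 2 + (4 * t ^ 3 + 3 * t ^ 2 - 4 * t - 2) := by
    rw [mul_pow, h]; ring
  rw [ha₄, hy]
  exact ⟨(cubic_eval_of_sq_eq_sq _ _ _ _ (by ring)).symm,
    (cubic_eval_of_sq_eq_sq _ _ _ _ rfl).symm⟩
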